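/- arXiv:2011.12798 — 2 statements merged into one kernel-verified Lean document; each statement's English description precedes it below -/
import Mathlib

section
/- The unique steady state x* of the single-tray ODE n x' = L(x_in − x) + V(y_in − y(x)) is globally asymptotically stable on [0,1]: for any initial condition in [0,1], the solution converges to x* as t → ∞. -/
/-!
On the half-line `u > -(α - 1)⁻¹`, where the denominator of `yeq α` is positive, the right-hand
side `F` is strictly decreasing and vanishes at `x*`. A level `b < min (x 0) x*` of this half-line
cannot be crossed downwards because `F b > 0`, so the trajectory stays in it. There
`(x - x*)²` is a Lyapunov function: its derivative `2 (x - x*) F(x)` is nonpositive, and bounded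
away from zero as long as `x` stays outside a neighbourhood of `x*`.
-/

noncomputable def yeq (α x : ℝ) : ℝ := α * x / (1 + (α - 1) * x)

open Set Filter Topology

theorem strictMonoOn_yeq {α : ℝ} (hα : 1 < α) : StrictMonoOn (yeq α) (Ioi (-(α - 1)⁻¹)) := by
  have hden : ∀ u ∈ Ioi (-(α - 1)⁻¹), 0 < 1 + (α - 1) * u := fun u hu => by
    have h := mul_lt_mul_of_pos_left (mem_Ioi.mp hu) (sub_pos.mpr hα)
    rw [mul_neg, mul_inv_cancel₀ (sub_pos.mpr hα).ne'] at h
    linarith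
  intro u hu v hv huv
  rw [yeq, yeq, div_lt_div_iff₀ (hden u hu) (hden v hv)]
  nlinarith

theorem strictAntiOn_tray_rhs {α n L V xin yin : ℝ} (hα : 1 < α) (hn : 0 < n) (hL : 0 < L)
    (hV : 0 ≤ V) :
    StrictAntiOn (fun u => (L * (xin - u) + V * (yin - yeq α u)) / n) (Ioi (-(α - 1)⁻¹)) := by
  intro u hu v hv huv
  have hy := (strictMonoOn_yeq hα hu hv huv).le
  apply div_lt_div_of_pos_right _ hn
  nlinarith [mul_le_mul_of_nonneg_left hy hV]

theorem le_of_hasDerivAt_comp_of_pos {f x : ℝ → ℝ} {b : ℝ} (hx : ∀ t, HasDerivAt x (f (x t)) t)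
    (hfb : 0 < f b) (h0 : b ≤ x 0) {t : ℝ} (ht : 0 ≤ t) : b ≤ x t := by
  have hcont : Continuous x := continuous_iff_continuousAt.mpr fun t => (hx t).continuousAt
  have := image_le_of_deriv_right_lt_deriv_boundary' (f := fun t => -x t) (B := fun _ => -b)
    (B' := 0) hcont.neg.continuousOn (fun t _ => (hx t).neg.hasDerivWithinAt) (neg_le_neg h0)
    continuousOn_const (fun _ _ => hasDerivWithinAt_const _ _ _)
    (fun s _ hs => by simp only [neg_inj] at hs; simpa [hs] using hfb) ⟨ht, le_rfl⟩
  exact neg_le_neg_iff.mp this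

theorem exists_lt_of_hasDerivAt_le_neg {W W' : ℝ → ℝ} {η κ : ℝ} (hW : ∀ t, HasDerivAt W (W' t) t)
    (hW0 : ∀ t, 0 ≤ W t) (hκ : 0 < κ) (hdecay : ∀ t, 0 ≤ t → η ≤ W t → W' t ≤ -κ) :
    ∃ t, 0 ≤ t ∧ W t < η := by
  by_contra! hstay
  have hcont : Continuous W := continuous_iff_continuousAt.mpr fun t => (hW t).continuousAt
  set T := (W 0 + 1) / κ
  have hT : 0 ≤ T := div_nonneg (by linarith [hW0 0]) hκ.le
  have hlin := image_le_of_deriv_right_le_deriv_boundary (B := fun t => W 0 - κ * t)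
    hcont.continuousOn (fun t _ => (hW t).hasDerivWithinAt) (by simp) (by fun_prop)
    (fun t _ => ((hasDerivAt_id t).const_mul κ).const_sub (W 0) |>.hasDerivWithinAt)
    (fun t ht => by simpa using hdecay t ht.1 (hstay t ht.1)) ⟨hT, le_rfl⟩
  have : κ * T = W 0 + 1 := mul_div_cancel₀ _ hκ.ne'
  linarith [hW0 T]

section StrictAntiOn

variable {f : ℝ → ℝ} {c s : ℝ}

theorem StrictAntiOn.sub_mul_nonpos_of_eq_zero (hf : StrictAntiOn f (Ioi c)) (hs : c < s)
    (hfs : f s = 0) {u : ℝ} (hu : c < u) : (u - s) * f u ≤ 0 := by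
  rcases le_total u s with hus | hsu
  · exact mul_nonpos_of_nonpos_of_nonneg (sub_nonpos.mpr hus) (hfs ▸ hf.antitoneOn hu hs hus)
  · exact mul_nonpos_of_nonneg_of_nonpos (sub_nonneg.mpr hsu) (hfs ▸ hf.antitoneOn hs hu hsu)

theorem StrictAntiOn.exists_sub_mul_le_neg (hf : StrictAntiOn f (Ioi c)) (hfs : f s = 0) {b ε : ℝ}
    (hcb : c < b) (hbs : b < s) (hε : 0 < ε) :
    ∃ δ > 0, ∀ u, b ≤ u → ε ≤ |u - s| → (u - s) * f u ≤ -δ := by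
  -- `max b (s - ε)` rather than `s - ε`, which may lie outside `Ioi c`
  set p := max b (s - ε)
  have hcp : c < p := lt_max_of_lt_left hcb
  have hps : p < s := max_lt hbs (by linarith)
  have hcs : c < s + ε := by linarith
  have hfp : 0 < f p := hfs ▸ hf hcp (hcb.trans hbs) hps
  have hfq : f (s + ε) < 0 := hfs ▸ hf (hcb.trans hbs) hcs (by linarith)
  refine ⟨ε * min (f p) (-f (s + ε)), mul_pos hε (lt_min hfp (by linarith)), fun u hbu hεu => ?_⟩
  rcases le_abs'.mp hεu with hlow | hhigh
  · have hfu : f p ≤ f u := hf.antitoneOn (hcb.trans_le hbu) hcp (le_max_of_le_right (by linarith))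
    nlinarith [min_le_left (f p) (-f (s + ε))]
  · have hfu : f u ≤ f (s + ε) := hf.antitoneOn hcs (by simp only [mem_Ioi]; linarith) (by linarith)
    nlinarith [min_le_right (f p) (-f (s + ε))]

theorem StrictAntiOn.tendsto_of_hasDerivAt_comp (hf : StrictAntiOn f (Ioi c)) (hs : c < s)
    (hfs : f s = 0) {x : ℝ → ℝ} (hx : ∀ t, HasDerivAt x (f (x t)) t) (h0 : c < x 0) :
    Tendsto x atTop (𝓝 s) := by
  obtain ⟨b, hcb, hb⟩ := exists_between (lt_min h0 hs)
  have hbx : ∀ t, 0 ≤ t → b ≤ x t := fun t ht =>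
    le_of_hasDerivAt_comp_of_pos hx (hfs ▸ hf hcb hs (hb.trans_le (min_le_right _ _)))
      (hb.le.trans (min_le_left _ _)) ht
  set W := fun t => (x t - s) ^ 2
  have hW : ∀ t, HasDerivAt W (2 * ((x t - s) * f (x t))) t := fun t => by
    simpa [mul_assoc] using ((hx t).sub_const s).fun_pow 2
  have hWanti : AntitoneOn W (Ici 0) :=
    antitoneOn_of_hasDerivWithinAt_nonpos (convex_Ici 0)
      (continuous_iff_continuousAt.mpr fun t => (hW t).continuousAt).continuousOn
      (fun t _ => (hW t).hasDerivWithinAt) fun t ht => by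
        rw [interior_Ici] at ht
        nlinarith [hf.sub_mul_nonpos_of_eq_zero hs hfs (hcb.trans_le (hbx t (le_of_lt ht)))]
  rw [Metric.tendsto_atTop]
  intro ε hε
  obtain ⟨δ, hδ, hdecay⟩ := hf.exists_sub_mul_le_neg hfs hcb (hb.trans_le (min_le_right _ _)) hε
  obtain ⟨t₀, ht₀, hWt₀⟩ := exists_lt_of_hasDerivAt_le_neg (η := ε ^ 2) hW (fun t => sq_nonneg _)
    (by positivity : 0 < 2 * δ) fun t ht hWt => by
      have := hdecay (x t) (hbx t ht) (by simpa [abs_of_pos hε] using sq_le_sq.mp hWt)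
      linarith
  refine ⟨t₀, fun t ht => ?_⟩
  have hWt : W t < ε ^ 2 := (hWanti ht₀ (ht₀.trans ht) ht).trans_lt hWt₀
  rw [Real.dist_eq]
  exact abs_lt_of_sq_lt_sq hWt hε.le

end StrictAntiOn

theorem steady_state_gas_general (α n L V xin yin xstar : ℝ) (hα : 1 < α)
    (hn : 0 < n) (hL : 0 < L) (hV : 0 < V)
    (hstar : xstar ∈ Set.Icc (0:ℝ) 1)
    (hzero : L * (xin - xstar) + V * (yin - yeq α xstar) = 0)
    (x : ℝ → ℝ)
    (hx : ∀ t, HasDerivAt x ((L * (xin - x t) + V * (yin - yeq α (x t))) / n) t)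
    (h0 : x 0 ∈ Set.Icc (0:ℝ) 1) :
    Filter.Tendsto x Filter.atTop (nhds xstar) := by
  have hc : -(α - 1)⁻¹ < 0 := neg_neg_of_pos (inv_pos.mpr (sub_pos.mpr hα))
  exact (strictAntiOn_tray_rhs hα hn hL hV.le).tendsto_of_hasDerivAt_comp
    (hc.trans_le hstar.1) (by simp only [hzero, zero_div]) hx (hc.trans_le h0.1)

theorem steady_state_gas (α n L V xin yin xstar : ℝ) (hα : 1 < α)
    (hn : 0 < n) (hL : 0 < L) (hV : 0 < V)
    (hxin : xin ∈ Set.Icc (0:ℝ) 1) (hyin : yin ∈ Set.Icc (0:ℝ) 1)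
    (hstar : xstar ∈ Set.Icc (0:ℝ) 1)
    (hzero : L * (xin - xstar) + V * (yin - yeq α xstar) = 0)
    (x : ℝ → ℝ)
    (hx : ∀ t, HasDerivAt x ((L * (xin - x t) + V * (yin - yeq α (x t))) / n) t)
    (h0 : x 0 ∈ Set.Icc (0:ℝ) 1) :
    Filter.Tendsto x Filter.atTop (nhds xstar) :=
  steady_state_gas_general α n L V xin yin xstar hα hn hL hV hstar hzero x hx h0
end

section
/- For the two-tray coupled system n_1 x_1' = L(x_in − x_1) + V(y(x_2) − y(x_1)), n_2 x_2' = L(x_1 − x_2) + V(y_in − y(x_2)) with positive constants and y strictly increasing, the box [0,1]² is positively invariant. -/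
/-!
On each face of the box the vector field points weakly inward, and it is Lipschitz on a
neighbourhood of the box (the pole of `yeq α` lies at `-1/(α - 1) < 0`). Let `e` be the
displacement of the state from its nearest point `p` of the box. Then
`d/dt ‖e‖² = 2 e·F(x) = 2 e·F(p) + 2 e·(F(x) - F(p)) ≤ C ‖e‖²`, since `e·F(p) ≤ 0` by
inwardness. By Grönwall, `e` stays zero for a while after any time at which the trajectory is in
the box, and continuous induction on `[0, t]` finishes the proof.
-/

open Set Topology
open scoped NNReal

/-- `x` minus its nearest point in `[a, b]` (when `a ≤ b`). -/
noncomputable def excessIcc (a b x : ℝ) : ℝ := max (x - b) 0 - max (a - x) 0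

section ExcessIcc

variable {a b x : ℝ}

lemma excessIcc_eq_zero_iff (hab : a ≤ b) : excessIcc a b x = 0 ↔ x ∈ Icc a b := by
  unfold excessIcc
  constructor
  · intro h
    constructor
    · by_contra! hxa
      rw [max_eq_right (by linarith), max_eq_left (by linarith)] at h
      linarith
    · by_contra! hbx
      rw [max_eq_left (by linarith), max_eq_right (by linarith)] at h
      linarith
  · rintro ⟨hax, hxb⟩
    rw [max_eq_right (by linarith), max_eq_right (by linarith), sub_self]

lemma sub_excessIcc_mem_Icc (hab : a ≤ b) : x - excessIcc a b x ∈ Icc a b := by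
  unfold excessIcc
  constructor <;> cases max_cases (x - b) 0 <;> cases max_cases (a - x) 0 <;> linarith

lemma sub_excessIcc_eq_right (hab : a ≤ b) (h : 0 < excessIcc a b x) :
    x - excessIcc a b x = b := by
  unfold excessIcc at *
  cases max_cases (x - b) 0 <;> cases max_cases (a - x) 0 <;> linarith

lemma sub_excessIcc_eq_left (hab : a ≤ b) (h : excessIcc a b x < 0) :
    x - excessIcc a b x = a := by
  unfold excessIcc at *
  cases max_cases (x - b) 0 <;> cases max_cases (a - x) 0 <;> linarith

lemma hasDerivAt_max_zero_sq (x : ℝ) : HasDerivAt (fun u => max u 0 ^ 2) (2 * max x 0) x := by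
  rcases lt_trichotomy x 0 with hx | rfl | hx
  · have : (fun u : ℝ => max u 0 ^ 2) =ᶠ[𝓝 x] fun _ => 0 := by
      filter_upwards [eventually_lt_nhds hx] with u hu
      simp [max_eq_right hu.le]
    simpa [max_eq_right hx.le] using (hasDerivAt_const x (0 : ℝ)).congr_of_eventuallyEq this
  · have hle : HasDerivWithinAt (fun u : ℝ => max u 0 ^ 2) 0 (Iic 0) 0 :=
      (hasDerivWithinAt_const _ _ 0).congr (fun u hu => by simp [max_eq_right (mem_Iic.1 hu)])
        (by simp)
    have hge : HasDerivWithinAt (fun u : ℝ => max u 0 ^ 2) 0 (Ici 0) 0 := by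
      simpa using ((hasDerivAt_pow 2 (0 : ℝ)).hasDerivWithinAt (s := Ici 0)).congr
        (fun u hu => by simp [max_eq_left (mem_Ici.1 hu)]) (by simp)
    simpa [← hasDerivWithinAt_univ] using hle.union hge
  · have : (fun u : ℝ => max u 0 ^ 2) =ᶠ[𝓝 x] fun u => u ^ 2 := by
      filter_upwards [eventually_gt_nhds hx] with u hu
      rw [max_eq_left hu.le]
    simpa [max_eq_left hx.le] using (hasDerivAt_pow 2 x).congr_of_eventuallyEq this

lemma excessIcc_sq (hab : a ≤ b) (x : ℝ) :
    excessIcc a b x ^ 2 = max (x - b) 0 ^ 2 + max (a - x) 0 ^ 2 := by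
  unfold excessIcc
  cases max_cases (x - b) 0 <;> cases max_cases (a - x) 0 <;> nlinarith

lemma hasDerivAt_excessIcc_sq (hab : a ≤ b) (x : ℝ) :
    HasDerivAt (fun u => excessIcc a b u ^ 2) (2 * excessIcc a b x) x := by
  have hup := (hasDerivAt_max_zero_sq (x - b)).comp x ((hasDerivAt_id x).sub_const b)
  have hlow := (hasDerivAt_max_zero_sq (a - x)).comp x ((hasDerivAt_id x).const_sub a)
  rw [show 2 * excessIcc a b x = 2 * max (x - b) 0 * 1 + 2 * max (a - x) 0 * -1 by
    unfold excessIcc; ring]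
  exact (hup.add hlow).congr_of_eventuallyEq (.of_eq (funext (excessIcc_sq hab)))

end ExcessIcc

lemma nonpos_of_deriv_le_mul_self {f f' : ℝ → ℝ} {K a b : ℝ}
    (hf : ∀ x ∈ Icc a b, HasDerivAt f (f' x) x) (ha : f a ≤ 0)
    (bound : ∀ x ∈ Ico a b, f' x ≤ K * f x) : ∀ x ∈ Icc a b, f x ≤ 0 := by
  intro x hx
  calc f x ≤ gronwallBound 0 K 0 (x - a) :=
        le_gronwallBound_of_liminf_deriv_right_le
          (fun y hy => (hf y hy).continuousAt.continuousWithinAt)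
          (fun y hy _ hr =>
            (hf y (Ico_subset_Icc_self hy)).hasDerivWithinAt.liminf_right_slope_le hr)
          ha (by simpa using bound) x hx
    _ = 0 := gronwallBound_ε0_δ0 K _

lemma sq_norm_le_sum_sq {ι : Type*} [Fintype ι] (v : ι → ℝ) : ‖v‖ ^ 2 ≤ ∑ i, v i ^ 2 := by
  have hle : ‖v‖ ≤ √(∑ i, v i ^ 2) :=
    (pi_norm_le_iff_of_nonneg (Real.sqrt_nonneg _)).2 fun i =>
      Real.abs_le_sqrt (Finset.single_le_sum (fun j _ => sq_nonneg (v j)) (Finset.mem_univ i))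
  calc ‖v‖ ^ 2 ≤ √(∑ i, v i ^ 2) ^ 2 := by gcongr
    _ = ∑ i, v i ^ 2 := Real.sq_sqrt (Finset.sum_nonneg fun i _ => sq_nonneg (v i))

section Box

variable {ι : Type*} {a b : ι → ℝ}

noncomputable def boxExcess (a b y : ι → ℝ) : ι → ℝ := fun i => excessIcc (a i) (b i) (y i)

def IsInwardOnIcc (F : (ι → ℝ) → ι → ℝ) (a b : ι → ℝ) : Prop :=
  ∀ p ∈ Icc a b, ∀ i, (p i = a i → 0 ≤ F p i) ∧ (p i = b i → F p i ≤ 0)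

lemma sub_boxExcess_mem_Icc (hab : a ≤ b) (y : ι → ℝ) : y - boxExcess a b y ∈ Icc a b :=
  ⟨fun i => (sub_excessIcc_mem_Icc (hab i)).1, fun i => (sub_excessIcc_mem_Icc (hab i)).2⟩

lemma boxExcess_eq_zero_iff (hab : a ≤ b) {y : ι → ℝ} : boxExcess a b y = 0 ↔ y ∈ Icc a b := by
  simp only [funext_iff, boxExcess, Pi.zero_apply, excessIcc_eq_zero_iff (hab _), mem_Icc,
    Pi.le_def, forall_and]

lemma boxExcess_mul_le_zero (hab : a ≤ b) {F : (ι → ℝ) → ι → ℝ} (hF : IsInwardOnIcc F a b)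
    (y : ι → ℝ) (i : ι) : boxExcess a b y i * F (y - boxExcess a b y) i ≤ 0 := by
  have hp := hF _ (sub_boxExcess_mem_Icc hab y) i
  rcases lt_trichotomy (boxExcess a b y i) 0 with hneg | hzero | hpos
  · exact mul_nonpos_of_nonpos_of_nonneg hneg.le (hp.1 (sub_excessIcc_eq_left (hab i) hneg))
  · simp [hzero]
  · exact mul_nonpos_of_nonneg_of_nonpos hpos.le (hp.2 (sub_excessIcc_eq_right (hab i) hpos))

variable [Fintype ι]

lemma sum_boxExcess_sq_nonpos_iff (hab : a ≤ b) {y : ι → ℝ} :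
    ∑ i, boxExcess a b y i ^ 2 ≤ 0 ↔ y ∈ Icc a b := by
  rw [← boxExcess_eq_zero_iff hab, funext_iff]
  constructor
  · intro h i
    have hsq := (Fintype.sum_eq_zero_iff_of_nonneg fun j => sq_nonneg (boxExcess a b y j)).1
      (le_antisymm h (by positivity))
    simpa using congrFun hsq i
  · intro h
    simp [h]

lemma sum_boxExcess_mul_le (hab : a ≤ b) {F : (ι → ℝ) → ι → ℝ} {U : Set (ι → ℝ)} {K : ℝ≥0}
    (hF : IsInwardOnIcc F a b) (hlip : LipschitzOnWith K F U) (hbox : Icc a b ⊆ U)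
    {y : ι → ℝ} (hy : y ∈ U) :
    ∑ i, 2 * boxExcess a b y i * F y i
      ≤ 2 * K * Fintype.card ι * ∑ i, boxExcess a b y i ^ 2 := by
  set e := boxExcess a b y
  set p := y - e
  have hdist : dist (F y) (F p) ≤ K * ‖e‖ := by
    simpa [p, dist_eq_norm] using hlip.dist_le_mul y hy p (hbox (sub_boxExcess_mem_Icc hab y))
  have hterm (i : ι) : 2 * e i * F y i ≤ 2 * (K * ‖e‖ ^ 2) := by
    have hFi : |F y i - F p i| ≤ K * ‖e‖ := (dist_le_pi_dist (F y) (F p) i).trans hdist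
    have hei : |e i| ≤ ‖e‖ := norm_le_pi_norm e i
    have hinward := boxExcess_mul_le_zero hab hF y i
    have hcross : e i * (F y i - F p i) ≤ ‖e‖ * (K * ‖e‖) :=
      calc e i * (F y i - F p i) ≤ |e i| * |F y i - F p i| := (le_abs_self _).trans (abs_mul _ _).le
        _ ≤ ‖e‖ * (K * ‖e‖) := mul_le_mul hei hFi (abs_nonneg _) (norm_nonneg e)
    nlinarith
  calc ∑ i, 2 * e i * F y i ≤ ∑ _i : ι, 2 * (K * ‖e‖ ^ 2) := Finset.sum_le_sum fun i _ => hterm i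
    _ = 2 * K * Fintype.card ι * ‖e‖ ^ 2 := by
      simp only [Finset.sum_const, Finset.card_univ, nsmul_eq_mul]; ring
    _ ≤ 2 * K * Fintype.card ι * ∑ i, e i ^ 2 := by gcongr; exact sq_norm_le_sum_sq e

theorem mem_Icc_of_isInwardOnIcc (hab : a ≤ b) {F : (ι → ℝ) → ι → ℝ} {U : Set (ι → ℝ)}
    {K : ℝ≥0} (hU : IsOpen U) (hbox : Icc a b ⊆ U) (hF : IsInwardOnIcc F a b)
    (hlip : LipschitzOnWith K F U) {x : ℝ → ι → ℝ} (hx : ∀ t, HasDerivAt x (F (x t)) t)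
    {t₀ : ℝ} (h₀ : x t₀ ∈ Icc a b) : ∀ t ≥ t₀, x t ∈ Icc a b := by
  have hcont : Continuous x := continuous_iff_continuousAt.2 fun t => (hx t).continuousAt
  have hQ (s : ℝ) : HasDerivAt (fun r => ∑ i, boxExcess a b (x r) i ^ 2)
      (∑ i, 2 * boxExcess a b (x s) i * F (x s) i) s :=
    HasDerivAt.fun_sum fun i _ =>
      ((hasDerivAt_excessIcc_sq (hab i) (x s i)).comp s (hasDerivAt_pi.1 (hx s) i) :)
  have hstep (s : ℝ) (hs : x s ∈ Icc a b) : x ⁻¹' Icc a b ∈ 𝓝[>] s := by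
    obtain ⟨ε, hε, hball⟩ := Metric.mem_nhds_iff.1
      (hcont.continuousAt.preimage_mem_nhds (hU.mem_nhds (hbox hs)))
    have hQ0 := nonpos_of_deriv_le_mul_self (b := s + ε / 2) (fun r _ => hQ r)
      ((sum_boxExcess_sq_nonpos_iff hab).2 hs) fun r hr =>
        sum_boxExcess_mul_le hab hF hlip hbox (hball ?_)
    · filter_upwards [Ioo_mem_nhdsGT (show s < s + ε / 2 by linarith)] with r hr
      exact (sum_boxExcess_sq_nonpos_iff hab).1 (hQ0 r (Ioo_subset_Icc_self hr))
    · rw [Metric.mem_ball, Real.dist_eq, abs_lt]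
      constructor <;> linarith [hr.1, hr.2]
  intro t ht
  exact IsClosed.Icc_subset_of_forall_mem_nhdsWithin
    ((isClosed_Icc.preimage hcont).inter isClosed_Icc) h₀ (fun s hs => hstep s hs.1) ⟨ht, le_rfl⟩

end Box

section Equilibrium

variable {α x y : ℝ}

lemma yeq_zero (α : ℝ) : yeq α 0 = 0 := by simp [yeq]

lemma yeq_one (hα : α ≠ 0) : yeq α 1 = 1 := by simp [yeq, hα]

lemma yeq_mem_Icc (hα : 0 < α) (hx : x ∈ Icc (0 : ℝ) 1) : yeq α x ∈ Icc (0 : ℝ) 1 := by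
  have hD : 0 < 1 + (α - 1) * x := by
    rcases hx.2.eq_or_lt with rfl | hx₁
    · linarith
    · nlinarith [mul_nonneg hα.le hx.1]
  refine ⟨div_nonneg (mul_nonneg hα.le hx.1) hD.le, (div_le_one hD).2 (by linarith [hx.2])⟩

lemma yeq_sub_yeq (hx : 1 + (α - 1) * x ≠ 0) (hy : 1 + (α - 1) * y ≠ 0) :
    yeq α x - yeq α y = α * (x - y) / ((1 + (α - 1) * x) * (1 + (α - 1) * y)) := by
  rw [yeq, yeq, div_sub_div _ _ hx hy]
  ring

lemma abs_yeq_sub_yeq_le (hα : 0 ≤ α) (hx : 1 / 2 ≤ 1 + (α - 1) * x)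
    (hy : 1 / 2 ≤ 1 + (α - 1) * y) : |yeq α x - yeq α y| ≤ 4 * α * |x - y| := by
  have hDD : 1 / 4 ≤ (1 + (α - 1) * x) * (1 + (α - 1) * y) := by nlinarith
  rw [yeq_sub_yeq (by linarith) (by linarith), abs_div, abs_mul, abs_of_nonneg hα,
    abs_of_pos (show 0 < (1 + (α - 1) * x) * (1 + (α - 1) * y) by linarith),
    div_le_iff₀ (by linarith)]
  nlinarith [mul_nonneg hα (abs_nonneg (x - y))]

end Equilibrium

noncomputable def trayField (α n₁ n₂ L V xin yin : ℝ) (x : Fin 2 → ℝ) : Fin 2 → ℝ :=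
  ![(L * (xin - x 0) + V * (yeq α (x 1) - yeq α (x 0))) / n₁,
    (L * (x 0 - x 1) + V * (yin - yeq α (x 1))) / n₂]

section TrayField

variable {α n₁ n₂ L V xin yin : ℝ}

lemma isInwardOnIcc_trayField (hα : 0 < α) (hn₁ : 0 < n₁) (hn₂ : 0 < n₂) (hL : 0 ≤ L)
    (hV : 0 ≤ V) (hxin : xin ∈ Icc (0 : ℝ) 1) (hyin : yin ∈ Icc (0 : ℝ) 1) :
    IsInwardOnIcc (trayField α n₁ n₂ L V xin yin) 0 1 := by
  intro p ⟨hp₀, hp₁⟩ i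
  have hp0 : p 0 ∈ Icc (0 : ℝ) 1 := ⟨hp₀ 0, hp₁ 0⟩
  have hp1 : p 1 ∈ Icc (0 : ℝ) 1 := ⟨hp₀ 1, hp₁ 1⟩
  have hy₀ := yeq_mem_Icc hα hp0
  have hy₁ := yeq_mem_Icc hα hp1
  fin_cases i <;> refine ⟨fun hpi => div_nonneg ?_ (by positivity),
    fun hpi => div_nonpos_of_nonpos_of_nonneg ?_ (by positivity)⟩ <;>
    simp only [Fin.zero_eta, Fin.mk_one, Pi.zero_apply, Pi.one_apply] at hpi <;>
    simp only [hpi, yeq_zero, yeq_one hα.ne'] <;>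
    nlinarith [hxin.1, hxin.2, hyin.1, hyin.2, hy₀.1, hy₀.2, hy₁.1, hy₁.2, hp0.1, hp0.2, hp1.1,
      hp1.2]

lemma lipschitzOnWith_trayField (hα : 0 ≤ α) (hn₁ : 0 < n₁) (hn₂ : 0 < n₂) (hL : 0 ≤ L)
    (hV : 0 ≤ V) :
    LipschitzOnWith (Real.toNNReal ((2 * L + 8 * α * V) / n₁ + (2 * L + 8 * α * V) / n₂))
      (trayField α n₁ n₂ L V xin yin) {v | ∀ i, 1 / 2 < 1 + (α - 1) * v i} := by
  refine LipschitzOnWith.of_dist_le' fun v hv w hw => ?_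
  set d := dist v w
  have hx (i : Fin 2) : |v i - w i| ≤ d := dist_le_pi_dist v w i
  have hy (i : Fin 2) : |yeq α (v i) - yeq α (w i)| ≤ 4 * α * d :=
    (abs_yeq_sub_yeq_le hα (hv i).le (hw i).le).trans (by gcongr; exact hx i)
  have hLx (i : Fin 2) : |L * (v i - w i)| ≤ L * d := by
    rw [abs_mul, abs_of_nonneg hL]
    exact mul_le_mul_of_nonneg_left (hx i) hL
  have hVy (i : Fin 2) : |V * (yeq α (v i) - yeq α (w i))| ≤ V * (4 * α * d) := by
    rw [abs_mul, abs_of_nonneg hV]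
    exact mul_le_mul_of_nonneg_left (hy i) hV
  have hc : 0 ≤ 2 * L + 8 * α * V := by positivity
  have hd : 0 ≤ d := dist_nonneg
  have hcomp {A B n : ℝ} (hn : 0 < n) (hAB : |A - B| ≤ (2 * L + 8 * α * V) * d) :
      dist (A / n) (B / n) ≤ (2 * L + 8 * α * V) / n * d := by
    rw [Real.dist_eq, div_sub_div_same, abs_div, abs_of_pos hn, div_mul_eq_mul_div]
    gcongr
  rw [dist_pi_le_iff (by positivity), Fin.forall_fin_two]
  constructor
  · refine (hcomp hn₁ ?_).trans (by gcongr; exact le_add_of_nonneg_right (by positivity))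
    rw [abs_le]
    constructor <;> linarith [abs_le.1 (hLx 0), abs_le.1 (hVy 0), abs_le.1 (hVy 1)]
  · refine (hcomp hn₂ ?_).trans (by gcongr; exact le_add_of_nonneg_left (by positivity))
    rw [abs_le]
    constructor <;> linarith [abs_le.1 (hLx 0), abs_le.1 (hLx 1), abs_le.1 (hVy 1)]

end TrayField

lemma vec2_mem_Icc_iff {a b : Fin 2 → ℝ} {u v : ℝ} :
    ![u, v] ∈ Icc a b ↔ u ∈ Icc (a 0) (b 0) ∧ v ∈ Icc (a 1) (b 1) := by
  simp only [mem_Icc, Pi.le_def, Fin.forall_fin_two, Matrix.cons_val_zero, Matrix.cons_val_one]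
  tauto

theorem two_tray_invariance (α n₁ n₂ L V xin yin : ℝ) (hα : 1 < α)
    (hn₁ : 0 < n₁) (hn₂ : 0 < n₂) (hL : 0 < L) (hV : 0 < V)
    (hxin : xin ∈ Set.Icc (0:ℝ) 1) (hyin : yin ∈ Set.Icc (0:ℝ) 1)
    (x₁ x₂ : ℝ → ℝ)
    (hx₁ : ∀ t, HasDerivAt x₁
      ((L * (xin - x₁ t) + V * (yeq α (x₂ t) - yeq α (x₁ t))) / n₁) t)
    (hx₂ : ∀ t, HasDerivAt x₂
      ((L * (x₁ t - x₂ t) + V * (yin - yeq α (x₂ t))) / n₂) t)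
    (h0 : x₁ 0 ∈ Set.Icc (0:ℝ) 1 ∧ x₂ 0 ∈ Set.Icc (0:ℝ) 1) :
    ∀ t ≥ (0:ℝ), x₁ t ∈ Set.Icc (0:ℝ) 1 ∧ x₂ t ∈ Set.Icc (0:ℝ) 1 := by
  have hopen : IsOpen {v : Fin 2 → ℝ | ∀ i, 1 / 2 < 1 + (α - 1) * v i} := by
    simp only [Set.ofPred_forall]
    exact isOpen_iInter_of_finite fun i => isOpen_lt continuous_const (by fun_prop)
  have hbox : Icc 0 1 ⊆ {v : Fin 2 → ℝ | ∀ i, 1 / 2 < 1 + (α - 1) * v i} :=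
    fun p hp i => by nlinarith [show (0 : ℝ) ≤ p i from hp.1 i]
  have hx (t : ℝ) : HasDerivAt (fun s => ![x₁ s, x₂ s])
      (trayField α n₁ n₂ L V xin yin ![x₁ t, x₂ t]) t :=
    hasDerivAt_pi.2 <| Fin.forall_fin_two.2
      ⟨by simpa [trayField] using hx₁ t, by simpa [trayField] using hx₂ t⟩
  intro t ht
  exact vec2_mem_Icc_iff.1 <| mem_Icc_of_isInwardOnIcc zero_le_one hopen hbox
    (isInwardOnIcc_trayField (by linarith) hn₁ hn₂ hL.le hV.le hxin hyin)
    (lipschitzOnWith_trayField (by linarith) hn₁ hn₂ hL.le hV.le) hx (vec2_mem_Icc_iff.2 h0) t ht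
end
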